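/- In ℝ², let K be the closed unit disk centered at the origin and let N = ℓ₁ ∪ ℓ₂, where ℓ₁ is the closed segment from (0,−1) to (0,1) and ℓ₂ is the closed segment from (−1,0) to (1,0). Then the limit D_N(K) = lim_{ε→0⁺} (vol(K + εN) − vol(K))/ε exists and equals 4√2. -/

import Mathlib

open MeasureTheory Filter Set Metric
open scoped Pointwise InnerProductSpace ENNReal Topology

noncomputable section

/-- `ℝ^d` with the Euclidean metric. -/
abbrev Euc (d : ℕ) := EuclideanSpace ℝ (Fin d)

/-- `D_N(M) = L`: the limit `lim_{ε→0⁺} (vol(M + εN) − vol(M))/ε` exists and equals `L`.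
Here `M + ε • N` is the Minkowski sum and `vol` is `d`-dimensional Lebesgue measure. -/
def HasMinkDeriv {d : ℕ} (N M : Set (Euc d)) (L : ℝ) : Prop :=
  Tendsto (fun ε : ℝ => ((volume (M + ε • N)).toReal - (volume M).toReal) / ε)
    (𝓝[>] 0) (𝓝 L)

/-- `S` has zero `(d−1)`-dimensional upper Minkowski content:
`lim_{ε→0⁺} vol(S + εB)/ε = 0` where `B` is the closed unit ball. -/
def ZeroMinkowskiContent {d : ℕ} (S : Set (Euc d)) : Prop :=
  Tendsto (fun ε : ℝ => (volume (S + ε • closedBall (0 : Euc d) 1)).toReal / ε)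
    (𝓝[>] 0) (𝓝 0)

/-- `x` is a smooth (C¹) boundary point of `M` with outer unit normal `n`:
near `x`, `M` is a sublevel set `{g ≤ 0}` of a `C¹` function with nonvanishing
gradient, the boundary is the level set `{g = 0}`, and `n` is the direction of
the gradient of `g` at `x`. -/
def IsC1BoundaryPointWithNormal {d : ℕ} (M : Set (Euc d)) (x n : Euc d) : Prop :=
  x ∈ frontier M ∧ ‖n‖ = 1 ∧
  ∃ U : Set (Euc d), IsOpen U ∧ x ∈ U ∧ ∃ g : Euc d → ℝ,
    ContDiffOn ℝ 1 g U ∧ (∀ z ∈ U, gradient g z ≠ 0) ∧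
    M ∩ U = {z ∈ U | g z ≤ 0} ∧ frontier M ∩ U = {z ∈ U | g z = 0} ∧
    gradient g x = ‖gradient g x‖ • n

/-- `M` is a compact domain with piecewise `C¹` boundary, with singular set `sing`:
`M` is compact, equal to the closure of its interior, and its boundary is a `C¹`
hypersurface away from `sing`, a subset of the boundary with zero `(d−1)`-dimensional
upper Minkowski content. -/
def PiecewiseC1CompactDomain {d : ℕ} (M sing : Set (Euc d)) : Prop :=
  IsCompact M ∧ M = closure (interior M) ∧ sing ⊆ frontier M ∧
  ZeroMinkowskiContent sing ∧
  ∀ x ∈ frontier M \ sing, ∃ n : Euc d, IsC1BoundaryPointWithNormal M x n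

/-- The support function `h_N(u) = sup_{y ∈ N} ⟨y, u⟩` of a bounded set `N`. -/
def suppFn {d : ℕ} (N : Set (Euc d)) (u : Euc d) : ℝ :=
  sSup ((fun y : Euc d => ⟪y, u⟫_ℝ) '' N)

/-- The point `(a, b) ∈ ℝ²` (Euclidean plane). -/
def pt2 (a b : ℝ) : Euc 2 := (EuclideanSpace.equiv (Fin 2) ℝ).symm ![a, b]

/-!
`N` is the union of the two axis segments, so `K + εN` is the union of two stadia: the disk
swept along the vertical and along the horizontal segment. The vertical slice at abscissa `a` of
this union is that of the vertical stadium for `|a| ≤ c(ε)` and that of the horizontal one beyond,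
where `(c, c)` is the crossing point of their boundary arcs. Integrating with the antiderivative
`t √(1 - t²) + arcsin t` of `2 √(1 - t²)` gives the exact area `4 ε c(ε) + 4 arcsin c(ε)` for
`0 ≤ ε < 1`. At `ε = 0` this is `π`, and its derivative there is `4√2`, since `c(0) = √2 / 2`
and `c'(0) = 1 / 2`.
-/

open Real

section SymmetricSegment

variable {E : Type*} [AddCommGroup E] [Module ℝ E]

theorem segment_neg_self_eq_image (v : E) :
    segment ℝ (-v) v = (· • v) '' Icc (-1 : ℝ) 1 := by
  rw [← segment_eq_Icc (by norm_num : (-1 : ℝ) ≤ 1)]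
  simpa using (image_segment ℝ (LinearMap.toSpanSingleton ℝ E v).toAffineMap (-1) 1).symm

theorem smul_segment_neg_self {ε : ℝ} (hε : 0 ≤ ε) (v : E) :
    ε • segment ℝ (-v) v = (· • v) '' Icc (-ε) ε := by
  have hIcc : Icc (-ε) ε = (ε * ·) '' Icc (-1) 1 := by
    rw [image_mul_left_Icc hε (by norm_num)]; simp
  rw [segment_neg_self_eq_image, ← image_smul, image_image, hIcc, image_image]
  simp [mul_smul]

theorem mem_add_smul_segment_neg_self {K : Set E} {v x : E} {ε : ℝ} (hε : 0 ≤ ε) :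
    x ∈ K + ε • segment ℝ (-v) v ↔ ∃ t ∈ Icc (-ε) ε, x - t • v ∈ K := by
  rw [smul_segment_neg_self hε, Set.mem_add]
  constructor
  · rintro ⟨k, hk, _, ⟨t, ht, rfl⟩, rfl⟩
    exact ⟨t, ht, by simpa using hk⟩
  · rintro ⟨t, ht, hk⟩
    exact ⟨_, hk, _, ⟨t, ht, rfl⟩, sub_add_cancel x _⟩

end SymmetricSegment

theorem exists_mem_Icc_sq_sub_le_iff {ε b c : ℝ} (hε : 0 ≤ ε) :
    (∃ t ∈ Icc (-ε) ε, (b - t) ^ 2 ≤ c) ↔ max (|b| - ε) 0 ^ 2 ≤ c := by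
  constructor
  · rintro ⟨t, ht, h⟩
    have hdist : max (|b| - ε) 0 ≤ |b - t| :=
      max_le (by linarith [abs_sub_abs_le_abs_sub b t, abs_le.2 ht]) (abs_nonneg _)
    calc max (|b| - ε) 0 ^ 2 ≤ |b - t| ^ 2 := by gcongr
      _ ≤ c := by rwa [sq_abs]
  · intro h
    rcases le_total b (-ε) with hb | hb
    · refine ⟨-ε, ⟨le_rfl, by linarith⟩, ?_⟩
      rwa [abs_of_nonpos (by linarith), max_eq_left (by linarith),
        show -b - ε = -(b - -ε) by ring, neg_sq] at h
    rcases le_total b ε with hb' | hb'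
    · refine ⟨b, ⟨hb, hb'⟩, ?_⟩
      simpa using (sq_nonneg _).trans h
    · refine ⟨ε, ⟨by linarith, le_rfl⟩, ?_⟩
      rwa [abs_of_nonneg (by linarith), max_eq_left (by linarith)] at h

theorem volume_setOf_sq_le (D : ℝ) :
    volume {b : ℝ | b ^ 2 ≤ D} = ENNReal.ofReal (2 * √D) := by
  rcases lt_or_ge D 0 with hD | hD
  · have hempty : {b : ℝ | b ^ 2 ≤ D} = ∅ :=
      eq_empty_of_forall_notMem fun b hb ↦ (lt_of_lt_of_le hD (sq_nonneg b)).not_ge hb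
    simp [hempty, sqrt_eq_zero_of_nonpos hD.le]
  · have hIcc : {b : ℝ | b ^ 2 ≤ D} = Icc (-√D) √D := by
      ext b; exact Real.sq_le hD
    rw [hIcc, Real.volume_Icc]
    ring_nf

theorem hasDerivAt_mul_sqrt_one_sub_sq_add_arcsin {t : ℝ} (ht : t ∈ Ioo (-1 : ℝ) 1) :
    HasDerivAt (fun t ↦ t * √(1 - t ^ 2) + arcsin t) (2 * √(1 - t ^ 2)) t := by
  have hpos : 0 < 1 - t ^ 2 := by nlinarith [ht.1, ht.2]
  have hsqrt : HasDerivAt (fun t ↦ √(1 - t ^ 2)) (-t / √(1 - t ^ 2)) t := by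
    convert ((hasDerivAt_pow 2 t).const_sub 1).sqrt hpos.ne' using 1
    ring
  refine (((hasDerivAt_id' t).mul hsqrt).add (hasDerivAt_arcsin ht.1.ne' ht.2.ne)).congr_deriv ?_
  field_simp
  rw [sq_sqrt hpos.le]
  ring

theorem integral_two_mul_sqrt_one_sub_sq {a b : ℝ} (ha : -1 ≤ a) (hab : a ≤ b) (hb : b ≤ 1) :
    ∫ t in a..b, 2 * √(1 - t ^ 2) =
      (b * √(1 - b ^ 2) + arcsin b) - (a * √(1 - a ^ 2) + arcsin a) := by
  refine intervalIntegral.integral_eq_sub_of_hasDerivAt_of_le hab (by fun_prop)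
    (fun t ht ↦ hasDerivAt_mul_sqrt_one_sub_sq_add_arcsin ⟨by linarith [ht.1], by linarith [ht.2]⟩)
    (Continuous.intervalIntegrable (by fun_prop) _ _)

theorem setLIntegral_Icc_ofReal_eq_intervalIntegral {f : ℝ → ℝ} (hf : Continuous f)
    (hf₀ : 0 ≤ f) {a b : ℝ} (hab : a ≤ b) :
    ∫⁻ x in Icc a b, ENNReal.ofReal (f x) = ENNReal.ofReal (∫ x in a..b, f x) := by
  rw [← ofReal_integral_eq_lintegral_ofReal hf.integrableOn_Icc (ae_of_all _ hf₀),
    integral_Icc_eq_integral_Ioc, intervalIntegral.integral_of_le hab]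

@[simp] theorem pt2_apply_zero (a b : ℝ) : pt2 a b 0 = a := rfl

@[simp] theorem pt2_apply_one (a b : ℝ) : pt2 a b 1 = b := rfl

theorem neg_pt2 (a b : ℝ) : -pt2 a b = pt2 (-a) (-b) := by
  ext i; fin_cases i <;> rfl

theorem mem_closedBall_zero_one_iff (x : Euc 2) :
    x ∈ closedBall (0 : Euc 2) 1 ↔ x 0 ^ 2 + x 1 ^ 2 ≤ 1 := by
  rw [mem_closedBall_zero_iff, EuclideanSpace.norm_eq, Fin.sum_univ_two, sqrt_le_one]
  simp

theorem measurePreserving_coords :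
    MeasurePreserving (fun x : Euc 2 => (x 0, x 1)) volume volume :=
  (volume_preserving_finTwoArrow ℝ).comp
    (EuclideanSpace.volume_preserving_symm_measurableEquiv_toLp (ι := Fin 2))

def stadium (ε : ℝ) : Set (ℝ × ℝ) := {p | p.1 ^ 2 + max (|p.2| - ε) 0 ^ 2 ≤ 1}

def stadiumCross (ε : ℝ) : Set (ℝ × ℝ) := stadium ε ∪ Prod.swap ⁻¹' stadium ε

theorem mem_stadium_iff_exists {ε : ℝ} (hε : 0 ≤ ε) (a b : ℝ) :
    (a, b) ∈ stadium ε ↔ ∃ t ∈ Icc (-ε) ε, a ^ 2 + (b - t) ^ 2 ≤ 1 := by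
  simp only [stadium, mem_ofPred_eq, ← le_sub_iff_add_le',
    ← exists_mem_Icc_sq_sub_le_iff hε]

theorem closedBall_add_smul_plus_eq {ε : ℝ} (hε : 0 ≤ ε) :
    closedBall (0 : Euc 2) 1 +
        ε • (segment ℝ (pt2 0 (-1)) (pt2 0 1) ∪ segment ℝ (pt2 (-1) 0) (pt2 1 0)) =
      (fun x : Euc 2 => (x 0, x 1)) ⁻¹' stadiumCross ε := by
  have h₁ : pt2 0 (-1) = -pt2 0 1 := by rw [neg_pt2, neg_zero]
  have h₂ : pt2 (-1) 0 = -pt2 1 0 := by rw [neg_pt2, neg_zero]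
  ext x
  simp only [h₁, h₂, smul_set_union, add_union, mem_union, mem_add_smul_segment_neg_self hε,
    mem_closedBall_zero_one_iff, stadiumCross, mem_preimage, Prod.swap_prod_mk,
    mem_stadium_iff_exists hε]
  simp [add_comm]

theorem measurableSet_stadiumCross (ε : ℝ) : MeasurableSet (stadiumCross ε) := by
  have h : MeasurableSet (stadium ε) := measurableSet_le (by fun_prop) measurable_const
  exact h.union (measurable_swap h)

/-- `(c, c)` with `c = stadiaCrossing ε` is where the arcs `‖p - (0, ε)‖ = 1` and
`‖p - (ε, 0)‖ = 1` bounding the two stadia cross. -/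
def stadiaCrossing (ε : ℝ) : ℝ := (ε + √(2 - ε ^ 2)) / 2

def stadiumCrossArea (ε : ℝ) : ℝ := 4 * ε * stadiaCrossing ε + 4 * arcsin (stadiaCrossing ε)

section StadiumCross

variable {ε : ℝ}

theorem sqrt_two_sub_sq_sq (hε : 0 ≤ ε) (hε₁ : ε < 1) : √(2 - ε ^ 2) ^ 2 = 2 - ε ^ 2 :=
  sq_sqrt (by nlinarith)

theorem lt_stadiaCrossing (hε : 0 ≤ ε) (hε₁ : ε < 1) : ε < stadiaCrossing ε := by
  unfold stadiaCrossing
  nlinarith [sqrt_two_sub_sq_sq hε hε₁, sqrt_nonneg (2 - ε ^ 2)]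

theorem stadiaCrossing_lt_one (hε : 0 ≤ ε) (hε₁ : ε < 1) : stadiaCrossing ε < 1 := by
  unfold stadiaCrossing
  nlinarith [sqrt_two_sub_sq_sq hε hε₁, sqrt_nonneg (2 - ε ^ 2)]

theorem stadiaCrossing_sq_add_sq (hε : 0 ≤ ε) (hε₁ : ε < 1) :
    stadiaCrossing ε ^ 2 + (stadiaCrossing ε - ε) ^ 2 = 1 := by
  unfold stadiaCrossing
  nlinarith [sqrt_two_sub_sq_sq hε hε₁]

theorem sq_add_sub_sq_le_one_iff (hε : 0 ≤ ε) (hε₁ : ε < 1) {u : ℝ} (hu : 0 ≤ u) :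
    u ^ 2 + (u - ε) ^ 2 ≤ 1 ↔ u ≤ stadiaCrossing ε := by
  have hc := stadiaCrossing_sq_add_sq hε hε₁
  have hεc := lt_stadiaCrossing hε hε₁
  constructor
  · intro h
    by_contra! hlt
    nlinarith
  · intro h
    nlinarith

theorem sub_le_sqrt_one_sub_sq_iff (hε : 0 ≤ ε) (hε₁ : ε < 1) {u : ℝ} (hεu : ε ≤ u)
    (hu : u ≤ 1) : u - ε ≤ √(1 - u ^ 2) ↔ u ≤ stadiaCrossing ε := by
  rw [le_sqrt (by linarith) (by nlinarith), ← sq_add_sub_sq_le_one_iff hε hε₁ (by linarith)]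
  constructor <;> intro h <;> linarith

theorem sqrt_one_sub_stadiaCrossing_sq (hε : 0 ≤ ε) (hε₁ : ε < 1) :
    √(1 - stadiaCrossing ε ^ 2) = stadiaCrossing ε - ε := by
  rw [← stadiaCrossing_sq_add_sq hε hε₁, add_sub_cancel_left,
    sqrt_sq (sub_nonneg.2 (lt_stadiaCrossing hε hε₁).le)]

theorem sqrt_one_sub_stadiaCrossing_sub_sq (hε : 0 ≤ ε) (hε₁ : ε < 1) :
    √(1 - (stadiaCrossing ε - ε) ^ 2) = stadiaCrossing ε := by
  rw [← stadiaCrossing_sq_add_sq hε hε₁, add_sub_cancel_right,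
    sqrt_sq (hε.trans (lt_stadiaCrossing hε hε₁).le)]

theorem arcsin_stadiaCrossing_sub (hε : 0 ≤ ε) (hε₁ : ε < 1) :
    arcsin (stadiaCrossing ε - ε) = π / 2 - arcsin (stadiaCrossing ε) := by
  rw [← sqrt_one_sub_stadiaCrossing_sq hε hε₁,
    ← arccos_eq_arcsin (hε.trans (lt_stadiaCrossing hε hε₁).le),
    arccos_eq_pi_div_two_sub_arcsin]

theorem mem_stadium_iff_abs_le {a b : ℝ} (ha : a ^ 2 ≤ 1) :
    (a, b) ∈ stadium ε ↔ |b| ≤ ε + √(1 - a ^ 2) := by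
  rw [stadium, mem_ofPred_eq, ← le_sub_iff_add_le',
    ← le_sqrt (le_max_right _ _) (by linarith), max_le_iff]
  constructor
  · rintro ⟨h, -⟩; linarith
  · intro h; exact ⟨by linarith, sqrt_nonneg _⟩

theorem slice_stadiumCross_of_abs_le {a : ℝ} (hε : 0 ≤ ε) (hε₁ : ε < 1)
    (ha : |a| ≤ stadiaCrossing ε) :
    Prod.mk a ⁻¹' stadiumCross ε = Icc (-(ε + √(1 - a ^ 2))) (ε + √(1 - a ^ 2)) := by
  have ha₁ : |a| ≤ 1 := ha.trans (stadiaCrossing_lt_one hε hε₁).le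
  have ha₂ : a ^ 2 ≤ 1 := by nlinarith [sq_abs a, abs_nonneg a]
  have hs := sq_sqrt (sub_nonneg.2 ha₂)
  have hs₀ := sqrt_nonneg (1 - a ^ 2)
  have hwidth : 1 - max (|a| - ε) 0 ^ 2 ≤ (ε + √(1 - a ^ 2)) ^ 2 := by
    rcases le_total (|a|) ε with hεa | hεa
    · rw [max_eq_right (by linarith)]
      nlinarith [sq_abs a, abs_nonneg a]
    · rw [max_eq_left (by linarith)]
      have := (sub_le_sqrt_one_sub_sq_iff hε hε₁ hεa ha₁).2 ha
      rw [sq_abs] at this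
      nlinarith [sq_abs a]
  ext b
  simp only [stadiumCross, mem_union, mem_preimage, Prod.swap_prod_mk,
    mem_stadium_iff_abs_le ha₂, mem_Icc, ← abs_le]
  refine ⟨fun h ↦ h.elim id fun h ↦ abs_le_of_sq_le_sq ?_ (by positivity), Or.inl⟩
  simp only [stadium, mem_ofPred_eq] at h
  linarith

theorem slice_stadiumCross_of_lt_abs {a : ℝ} (hε : 0 ≤ ε) (hε₁ : ε < 1)
    (ha : stadiaCrossing ε < |a|) :
    Prod.mk a ⁻¹' stadiumCross ε = {b | b ^ 2 ≤ 1 - (|a| - ε) ^ 2} := by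
  have hεa : ε < |a| := (lt_stadiaCrossing hε hε₁).trans ha
  ext b
  simp only [stadiumCross, stadium, mem_union, mem_preimage, Prod.swap_prod_mk, mem_ofPred_eq,
    max_eq_left (sub_nonneg.2 hεa.le)]
  refine ⟨fun h ↦ h.elim (fun h ↦ ?_) (fun h ↦ by linarith), fun h ↦ Or.inr (by linarith)⟩
  have ha₂ : a ^ 2 ≤ 1 := by nlinarith [sq_nonneg (max (|b| - ε) 0)]
  have ha₁ : |a| ≤ 1 := by nlinarith [sq_abs a, abs_nonneg a]
  have hb := (mem_stadium_iff_abs_le ha₂).1 h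
  have hs : √(1 - |a| ^ 2) < |a| - ε :=
    lt_of_not_ge fun h ↦ ha.not_ge ((sub_le_sqrt_one_sub_sq_iff hε hε₁ hεa.le ha₁).1 h)
  rw [sq_abs] at hs
  have hs₂ := sq_sqrt (sub_nonneg.2 ha₂)
  nlinarith [sq_abs b, abs_nonneg b, sqrt_nonneg (1 - a ^ 2), sq_abs a]

theorem integral_inner_stadiumCross (hε : 0 ≤ ε) (hε₁ : ε < 1) :
    ∫ a in -stadiaCrossing ε..stadiaCrossing ε, 2 * (ε + √(1 - a ^ 2)) =
      4 * ε * stadiaCrossing ε +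
        2 * (stadiaCrossing ε * (stadiaCrossing ε - ε) + arcsin (stadiaCrossing ε)) := by
  have hc₀ := hε.trans (lt_stadiaCrossing hε hε₁).le
  have hc₁ := stadiaCrossing_lt_one hε hε₁
  simp_rw [mul_add]
  rw [intervalIntegral.integral_add intervalIntegrable_const
      (Continuous.intervalIntegrable (by fun_prop) _ _), intervalIntegral.integral_const,
    integral_two_mul_sqrt_one_sub_sq (by linarith) (by linarith) hc₁.le, neg_sq, arcsin_neg,
    sqrt_one_sub_stadiaCrossing_sq hε hε₁, smul_eq_mul]
  ring

theorem integral_outer_stadiumCross (hε : 0 ≤ ε) (hε₁ : ε < 1) :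
    ∫ a in stadiaCrossing ε..1 + ε, 2 * √(1 - (a - ε) ^ 2) =
      arcsin (stadiaCrossing ε) - stadiaCrossing ε * (stadiaCrossing ε - ε) := by
  have hεc := lt_stadiaCrossing hε hε₁
  have hc₁ := stadiaCrossing_lt_one hε hε₁
  rw [intervalIntegral.integral_comp_sub_right (fun t ↦ 2 * √(1 - t ^ 2)), add_sub_cancel_right,
    integral_two_mul_sqrt_one_sub_sq (by linarith) (by linarith) le_rfl,
    sqrt_one_sub_stadiaCrossing_sub_sq hε hε₁, arcsin_stadiaCrossing_sub hε hε₁]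
  simp only [one_pow, sub_self, sqrt_zero, mul_zero, arcsin_one, zero_add]
  ring

theorem setLIntegral_Ioi_outer_stadiumCross (hε : 0 ≤ ε) (hε₁ : ε < 1) :
    ∫⁻ a in Ioi (stadiaCrossing ε), ENNReal.ofReal (2 * √(1 - (a - ε) ^ 2)) =
      ENNReal.ofReal (arcsin (stadiaCrossing ε) - stadiaCrossing ε * (stadiaCrossing ε - ε)) := by
  have hc₁ := stadiaCrossing_lt_one hε hε₁
  have htail : ∫⁻ a in Ioi (1 + ε), ENNReal.ofReal (2 * √(1 - (a - ε) ^ 2)) = 0 := by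
    refine (setLIntegral_congr_fun measurableSet_Ioi fun a (ha : 1 + ε < a) ↦ ?_).trans
      (lintegral_zero (μ := volume.restrict (Ioi (1 + ε))))
    rw [sqrt_eq_zero_of_nonpos (by nlinarith), mul_zero, ENNReal.ofReal_zero]
  rw [← Ioc_union_Ioi_eq_Ioi (by linarith : stadiaCrossing ε ≤ 1 + ε),
    lintegral_union measurableSet_Ioi Ioc_disjoint_Ioi_same, htail, add_zero,
    setLIntegral_congr Ioc_ae_eq_Icc,
    setLIntegral_Icc_ofReal_eq_intervalIntegral (by fun_prop) (fun _ ↦ by positivity)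
      (by linarith), integral_outer_stadiumCross hε hε₁]

theorem slice_stadiumCross_neg (a : ℝ) :
    Prod.mk (-a) ⁻¹' stadiumCross ε = Prod.mk a ⁻¹' stadiumCross ε := by
  ext b
  simp [stadiumCross, stadium]

theorem volume_slice_stadiumCross_of_abs_le {a : ℝ} (hε : 0 ≤ ε) (hε₁ : ε < 1)
    (ha : |a| ≤ stadiaCrossing ε) :
    volume (Prod.mk a ⁻¹' stadiumCross ε) = ENNReal.ofReal (2 * (ε + √(1 - a ^ 2))) := by
  rw [slice_stadiumCross_of_abs_le hε hε₁ ha, Real.volume_Icc, sub_neg_eq_add, ← two_mul]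

theorem volume_slice_stadiumCross_of_lt {a : ℝ} (hε : 0 ≤ ε) (hε₁ : ε < 1)
    (ha : stadiaCrossing ε < a) :
    volume (Prod.mk a ⁻¹' stadiumCross ε) = ENNReal.ofReal (2 * √(1 - (a - ε) ^ 2)) := by
  have ha' : |a| = a := abs_of_pos ((hε.trans_lt (lt_stadiaCrossing hε hε₁)).trans ha)
  rw [slice_stadiumCross_of_lt_abs hε hε₁ (ha'.symm ▸ ha), volume_setOf_sq_le, ha']

theorem volume_stadiumCross (hε : 0 ≤ ε) (hε₁ : ε < 1) :
    volume (stadiumCross ε) = ENNReal.ofReal (stadiumCrossArea ε) := by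
  have hc₀ : 0 ≤ stadiaCrossing ε := hε.trans (lt_stadiaCrossing hε hε₁).le
  have hc₁ := stadiaCrossing_lt_one hε hε₁
  have hinner : ∫⁻ a in Icc (-stadiaCrossing ε) (stadiaCrossing ε),
      volume (Prod.mk a ⁻¹' stadiumCross ε) = ENNReal.ofReal (4 * ε * stadiaCrossing ε +
        2 * (stadiaCrossing ε * (stadiaCrossing ε - ε) + arcsin (stadiaCrossing ε))) := by
    rw [setLIntegral_congr_fun measurableSet_Icc fun a ha ↦
        volume_slice_stadiumCross_of_abs_le hε hε₁ (abs_le.2 ha),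
      setLIntegral_Icc_ofReal_eq_intervalIntegral (by fun_prop) (fun _ ↦ by positivity)
        (by linarith), integral_inner_stadiumCross hε hε₁]
  have houter : ∫⁻ a in Ioi (stadiaCrossing ε), volume (Prod.mk a ⁻¹' stadiumCross ε) =
      ENNReal.ofReal (arcsin (stadiaCrossing ε) - stadiaCrossing ε * (stadiaCrossing ε - ε)) := by
    rw [← setLIntegral_Ioi_outer_stadiumCross hε hε₁]
    exact setLIntegral_congr_fun measurableSet_Ioi fun a ha ↦
      volume_slice_stadiumCross_of_lt hε hε₁ ha
  have hleft : ∫⁻ a in Iio (-stadiaCrossing ε), volume (Prod.mk a ⁻¹' stadiumCross ε) =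
      ∫⁻ a in Ioi (stadiaCrossing ε), volume (Prod.mk a ⁻¹' stadiumCross ε) := by
    rw [← (Measure.measurePreserving_neg volume).setLIntegral_comp_preimage_emb
      (Homeomorph.neg ℝ).measurableEmbedding _ (Ioi (stadiaCrossing ε))]
    simp [slice_stadiumCross_neg]
  have hnonneg : 0 ≤ arcsin (stadiaCrossing ε) - stadiaCrossing ε * (stadiaCrossing ε - ε) := by
    rw [← integral_outer_stadiumCross hε hε₁]
    exact intervalIntegral.integral_nonneg (by linarith) fun _ _ ↦ by positivity
  have harcsin : 0 ≤ arcsin (stadiaCrossing ε) := arcsin_nonneg.2 hc₀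
  rw [Measure.volume_eq_prod, Measure.prod_apply (measurableSet_stadiumCross ε),
    ← lintegral_add_compl _ (measurableSet_Ici (a := -stadiaCrossing ε)), compl_Ici,
    ← Icc_union_Ioi_eq_Ici (by linarith : -stadiaCrossing ε ≤ stadiaCrossing ε),
    lintegral_union measurableSet_Ioi ((Iic_disjoint_Ioi le_rfl).mono_left Icc_subset_Iic_self),
    hinner, hleft, houter, ← ENNReal.ofReal_add (by nlinarith [harcsin]) hnonneg,
    ← ENNReal.ofReal_add (by nlinarith [harcsin, lt_stadiaCrossing hε hε₁]) hnonneg,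
    stadiumCrossArea]
  ring_nf

theorem stadiaCrossing_zero : stadiaCrossing 0 = √2 / 2 := by
  simp [stadiaCrossing]

theorem arcsin_stadiaCrossing_zero : arcsin (stadiaCrossing 0) = π / 4 := by
  have h := arcsin_stadiaCrossing_sub le_rfl one_pos
  rw [sub_zero] at h
  linarith

theorem hasDerivAt_stadiaCrossing_zero : HasDerivAt stadiaCrossing (1 / 2) 0 := by
  have hsqrt := ((hasDerivAt_pow 2 (0 : ℝ)).const_sub 2).sqrt (by norm_num)
  refine (((hasDerivAt_id' 0).add hsqrt).div_const 2).congr_deriv ?_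
  simp

theorem hasDerivAt_stadiumCrossArea_zero : HasDerivAt stadiumCrossArea (4 * √2) 0 := by
  have hc := hasDerivAt_stadiaCrossing_zero
  have hsqrt : √(1 - stadiaCrossing 0 ^ 2) = √2 / 2 := by
    rw [sqrt_one_sub_stadiaCrossing_sq le_rfl one_pos, sub_zero, stadiaCrossing_zero]
  have h2 : √2 ^ 2 = 2 := sq_sqrt zero_le_two
  have h2₀ : 0 < √2 := by positivity
  have harcsin := (hasDerivAt_arcsin (x := stadiaCrossing 0)
    (by rw [stadiaCrossing_zero]; nlinarith) (by rw [stadiaCrossing_zero]; nlinarith)).comp 0 hc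
  refine ((((hasDerivAt_id' 0).const_mul 4).mul hc).add (harcsin.const_mul 4)).congr_deriv ?_
  rw [hsqrt, stadiaCrossing_zero]
  field_simp
  nlinarith

theorem stadiumCrossArea_zero : stadiumCrossArea 0 = π := by
  rw [stadiumCrossArea, arcsin_stadiaCrossing_zero]; ring

theorem stadiumCrossArea_nonneg (hε : 0 ≤ ε) (hε₁ : ε < 1) : 0 ≤ stadiumCrossArea ε := by
  have hc₀ := hε.trans (lt_stadiaCrossing hε hε₁).le
  have := arcsin_nonneg.2 hc₀
  unfold stadiumCrossArea
  positivity

end StadiumCross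

/-- In `ℝ²`, for `K` the closed unit disk and
`N = ℓ₁ ∪ ℓ₂` the union of the segments from `(0,−1)` to `(0,1)` and from
`(−1,0)` to `(1,0)`, the limit `D_N(K) = lim_{ε→0⁺} (vol(K + εN) − vol(K))/ε`
exists and equals `4√2`. -/
theorem minkDeriv_disk_plus_sign
    (K N : Set (Euc 2)) (hK : K = closedBall (0 : Euc 2) 1)
    (hN : N = segment ℝ (pt2 0 (-1)) (pt2 0 1) ∪ segment ℝ (pt2 (-1) 0) (pt2 1 0)) :
    HasMinkDeriv N K (4 * Real.sqrt 2) := by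
  subst hK hN
  refine ((hasDerivAt_iff_tendsto_slope.1 hasDerivAt_stadiumCrossArea_zero).mono_left
    (nhdsGT_le_nhdsNE 0)).congr' ?_
  filter_upwards [Ioo_mem_nhdsGT one_pos] with ε ⟨hε, hε₁⟩
  rw [slope_def_field, closedBall_add_smul_plus_eq hε.le, measurePreserving_coords.measure_preimage
      (measurableSet_stadiumCross ε).nullMeasurableSet, volume_stadiumCross hε.le hε₁,
    ENNReal.toReal_ofReal (stadiumCrossArea_nonneg hε.le hε₁),
    EuclideanSpace.volume_closedBall_fin_two, stadiumCrossArea_zero, sub_zero]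
  simp [pi_nonneg]
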